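/- Let d be a positive squarefree integer with d ≡ 1 (mod 4), n ≥ 1, and k ≥ 4. Let R = ℤ[√-d]/(2^k) with σ the ring endomorphism induced by conjugation, and let M = diag(1,…,1,-2) of size n+1. Then the diagonal matrix X = diag(1,…,1, 1+2^{k-2}) over R satisfies X·M·σ(X)ᵀ = M, and det(X)·σ(det(X)) equals the image of 1 + 2^{k-1} in R (which is not equal to the image of 1). -/
import Mathlib

open Matrix

/-- The quotient ring `ℤ[√-d]/(m)`. -/
abbrev Rq (d m : ℤ) : Type := Zsqrtd (-d) ⧸ Ideal.span {(m : Zsqrtd (-d))}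

/-- Conjugation `a + b√-d ↦ a - b√-d` descends to the quotient `ℤ[√-d]/(m)`. -/
noncomputable def conjQ (d m : ℤ) : Rq d m →+* Rq d m :=
  Ideal.quotientMap (Ideal.span {(m : Zsqrtd (-d))}) (starRingEnd (Zsqrtd (-d)))
    (by
      rw [Ideal.span_singleton_le_iff_mem, Ideal.mem_comap, map_intCast]
      exact Ideal.mem_span_singleton_self _)

/-- The diagonal matrix `diag(1, …, 1, -2)` of size `n+1`. -/
def Mmat (R : Type*) [Ring R] (n : ℕ) : Matrix (Fin (n + 1)) (Fin (n + 1)) R :=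
  Matrix.diagonal fun i => if i = Fin.last n then -2 else 1

lemma RqIntCast_eq_iff (d m a b : ℤ) :
    ((a : ℤ) : Rq d m) = ((b : ℤ) : Rq d m) ↔ m ∣ (a - b) := by
  have hcast : ∀ x : ℤ, ((x : ℤ) : Rq d m) =
      Ideal.Quotient.mk (Ideal.span {(m : Zsqrtd (-d))}) ((x : ℤ) : Zsqrtd (-d)) := fun x =>
    (map_intCast (Ideal.Quotient.mk (Ideal.span {(m : Zsqrtd (-d))})) x).symm
  rw [hcast a, hcast b, Ideal.Quotient.eq, Ideal.mem_span_singleton]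
  push_cast
  rw [show ((a : Zsqrtd (-d)) - b) = ((a - b : ℤ) : Zsqrtd (-d)) by push_cast; ring,
    Zsqrtd.intCast_dvd_intCast]

lemma conjQ_intCast (d m a : ℤ) : conjQ d m ((a : ℤ) : Rq d m) = ((a : ℤ) : Rq d m) :=
  map_intCast _ a

set_option maxHeartbeats 1000000 in
/-- The diagonal matrix `X = diag(1, …, 1, 1 + 2^{k-2})` over `ℤ[√-d]/(2^k)` lies in
`U(M)`, and the norm of its determinant is the image of `1 + 2^{k-1}`, which differs
from the image of `1`. -/
theorem norm_det_witness (d : ℤ) (hd : 0 < d) (hsf : Squarefree d) (hd4 : d % 4 = 1)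
    (n : ℕ) (hn : 1 ≤ n) (k : ℕ) (hk : 4 ≤ k) :
    letI X : Matrix (Fin (n + 1)) (Fin (n + 1)) (Rq d (2 ^ k)) :=
      Matrix.diagonal fun i => if i = Fin.last n then ((1 + 2 ^ (k - 2) : ℤ) : Rq d (2 ^ k)) else 1
    X * Mmat (Rq d (2 ^ k)) n * (X.map (conjQ d (2 ^ k)))ᵀ = Mmat (Rq d (2 ^ k)) n ∧
    X.det * conjQ d (2 ^ k) X.det = ((1 + 2 ^ (k - 1) : ℤ) : Rq d (2 ^ k)) ∧
    ((1 + 2 ^ (k - 1) : ℤ) : Rq d (2 ^ k)) ≠ ((1 : ℤ) : Rq d (2 ^ k)) := by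
  set X : Matrix (Fin (n + 1)) (Fin (n + 1)) (Rq d (2 ^ k)) :=
    Matrix.diagonal fun i => if i = Fin.last n then ((1 + 2 ^ (k - 2) : ℤ) : Rq d (2 ^ k)) else 1
    with hX
  set c : Rq d (2 ^ k) := ((1 + 2 ^ (k - 2) : ℤ) : Rq d (2 ^ k)) with hc
  have e1 : (2:ℤ) * 2 ^ (k - 2) = 2 ^ (k - 1) := by
    rw [← pow_succ']; congr 1; omega
  have e2 : (2:ℤ) ^ (k - 2) * 2 ^ (k - 2) = 2 ^ k * 2 ^ (k - 4) := by
    rw [← pow_add, ← pow_add]; congr 1; omega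
  have e3 : (2:ℤ) * 2 ^ (k - 1) = 2 ^ k := by
    rw [← pow_succ']; congr 1; omega
  have hmap : X.map ⇑(conjQ d (2 ^ k)) = X := by
    rw [hX, Matrix.diagonal_map (map_zero _)]
    refine congrArg Matrix.diagonal (funext fun i => ?_)
    by_cases h : i = Fin.last n
    · simp only [Function.comp, h, if_pos]
      rw [hc, conjQ_intCast]
    · simp [Function.comp, h]
  have hsq : c * c = ((1 + 2 ^ (k - 1) : ℤ) : Rq d (2 ^ k)) := by
    rw [hc, ← Int.cast_mul, RqIntCast_eq_iff]
    exact ⟨2 ^ (k - 4), by rw [← e2, ← e1]; ring⟩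
  have hUc : c * -2 * c = -2 := by
    have h4 : c * -2 * c = -2 * (c * c) := by ring
    rw [h4, hsq, show ((-2 : Rq d (2 ^ k)) = ((-2 : ℤ) : Rq d (2 ^ k))) by push_cast; ring,
      ← Int.cast_mul, RqIntCast_eq_iff]
    exact ⟨-1, by rw [← e3]; ring⟩
  refine ⟨?_, ?_, ?_⟩
  · rw [hmap, hX, Matrix.diagonal_transpose, Mmat, Matrix.diagonal_mul_diagonal,
      Matrix.diagonal_mul_diagonal]
    refine congrArg Matrix.diagonal (funext fun i => ?_)
    have hUc2 : c * 2 * c = 2 := by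
      have h5 := hUc
      rw [show c * -2 * c = -(c * 2 * c) by ring] at h5
      exact neg_injective h5
    by_cases h : i = Fin.last n <;> simp [h, hUc, hUc2]
  · rw [hX]
    rw [Matrix.det_diagonal]
    have hdet : ∏ i : Fin (n + 1), (if i = Fin.last n then c else 1) = c := by
      rw [Finset.prod_ite_eq' Finset.univ (Fin.last n) (fun _ => c)]
      simp
    rw [hdet, hc, conjQ_intCast, ← hc, hsq]
  · rw [Ne, RqIntCast_eq_iff]
    intro hdvd
    have : (1 + 2 ^ (k - 1) - 1 : ℤ) = 2 ^ (k - 1) := by ring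
    rw [this] at hdvd
    have h1 : (2:ℤ) ^ k = 2 ^ (k - 1) * 2 := by rw [← pow_succ]; congr 1; omega
    rw [h1] at hdvd
    have h2 : (0:ℤ) < 2 ^ (k - 1) := by positivity
    have h3 := Int.le_of_dvd h2 hdvd
    linarith
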